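/- arXiv:2303.15640 — 2 statements merged into one kernel-verified Lean document; each statement's English description precedes it below -/
import Mathlib

section
/- Let 𝓘 measure effect a and 𝓙 measure effect b, and let ρ be a state with tr(ρa) ≠ 0 and tr(ρb) ≠ 0. Bayes' quantum second rule P_ρ(b|a) = (P_ρ(b)/P_ρ(a))·P_ρ(a|b) holds for every such state ρ if and only if 𝓘*(b) = 𝓙*(a). -/
open scoped ComplexOrder

open Matrix BigOperators

/-- An effect on a finite-dimensional Hilbert space: `0 ≤ a ≤ I`. -/
def IsEffect {n : ℕ} (a : Matrix (Fin n) (Fin n) ℂ) : Prop :=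
  a.PosSemidef ∧ (1 - a).PosSemidef

/-- A state: positive operator of trace one. -/
def IsState {n : ℕ} (ρ : Matrix (Fin n) (Fin n) ℂ) : Prop :=
  ρ.PosSemidef ∧ ρ.trace = 1

/-- The dual of the operation with Kraus operators `K i`. -/
noncomputable def KrausDual {n m : ℕ} (K : Fin m → Matrix (Fin n) (Fin n) ℂ)
    (A : Matrix (Fin n) (Fin n) ℂ) : Matrix (Fin n) (Fin n) ℂ :=
  ∑ i, (K i)ᴴ * A * K i

/-!
Since `P_ρ(b)/P_ρ(a) · P_ρ(a|b) = tr(ρ 𝓙*(a)) / tr(ρ a)`, the rule says exactly that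
`tr(ρ 𝓘*(b)) = tr(ρ 𝓙*(a))` for every state giving `a` and `b` nonzero probability.
If `a, b ≠ 0` the maximally mixed state `ρ₀` is such a state, and so is the midpoint of `ρ₀` and
any state `ρ`; the two identities together give the one at `ρ`, and states separate operators.
If `a = 0`, then `0 ≤ 𝓘*(b) ≤ 𝓘*(1) = a` forces `𝓘*(b) = 0 = 𝓙*(a)`; symmetrically for `b = 0`.
-/

open scoped MatrixOrder

namespace Matrix

variable {ι : Type*} [Fintype ι]

lemma PosSemidef.trace_mul_nonneg {ρ A : Matrix ι ι ℂ} (hρ : ρ.PosSemidef) (hA : A.PosSemidef) :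
    0 ≤ (ρ * A).trace := by
  classical
  obtain ⟨B, rfl⟩ := CStarAlgebra.nonneg_iff_eq_star_mul_self.mp hρ.nonneg
  rw [star_eq_conjTranspose, Matrix.mul_assoc, trace_mul_comm]
  exact (hA.mul_mul_conjTranspose_same B).trace_nonneg

lemma trace_vecMulVec_star_mul (v : ι → ℂ) (M : Matrix ι ι ℂ) :
    (vecMulVec v (star v) * M).trace = star v ⬝ᵥ M *ᵥ v := by
  rw [vecMulVec_mul, trace_vecMulVec, dotProduct_comm, dotProduct_mulVec]

lemma eq_zero_of_forall_dotProduct_mulVec_self {M : Matrix ι ι ℂ}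
    (h : ∀ v, star v ⬝ᵥ M *ᵥ v = 0) : M = 0 := by
  classical
  rw [← toEuclideanLin.map_eq_zero_iff, ← inner_map_self_eq_zero]
  intro x
  rw [← inner_conj_symm, EuclideanSpace.inner_eq_star_dotProduct, ofLp_toLpLin, toLin'_apply,
    dotProduct_comm, h, map_zero]

lemma eq_of_forall_posSemidef_trace_mul_eq {X Y : Matrix ι ι ℂ}
    (h : ∀ P : Matrix ι ι ℂ, P.PosSemidef → (P * X).trace = (P * Y).trace) : X = Y := by
  rw [← sub_eq_zero]
  refine eq_zero_of_forall_dotProduct_mulVec_self fun v => ?_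
  rw [← trace_vecMulVec_star_mul, Matrix.mul_sub, trace_sub,
    h _ (posSemidef_vecMulVec_self_star v), sub_self]

end Matrix

section KrausDual

variable {n m : ℕ} (K : Fin m → Matrix (Fin n) (Fin n) ℂ)

@[simp]
lemma krausDual_zero : KrausDual K 0 = 0 := by
  simp [KrausDual]

lemma krausDual_sub (A B : Matrix (Fin n) (Fin n) ℂ) :
    KrausDual K (A - B) = KrausDual K A - KrausDual K B := by
  simp only [KrausDual, Matrix.mul_sub, Matrix.sub_mul, Finset.sum_sub_distrib]

lemma krausDual_mono {A B : Matrix (Fin n) (Fin n) ℂ} (h : A ≤ B) :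
    KrausDual K A ≤ KrausDual K B := by
  rw [Matrix.le_iff, ← krausDual_sub]
  exact Matrix.posSemidef_sum _ fun i _ => h.conjTranspose_mul_mul_same (K i)

lemma krausDual_eq_zero_of_krausDual_one_eq_zero (h : KrausDual K 1 = 0)
    {b : Matrix (Fin n) (Fin n) ℂ} (hb : IsEffect b) : KrausDual K b = 0 :=
  le_antisymm (h ▸ krausDual_mono K (Matrix.le_iff.mpr hb.2))
    (krausDual_zero K ▸ krausDual_mono K (Matrix.nonneg_iff_posSemidef.mpr hb.1))

end KrausDual

section IsState

variable {n : ℕ}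

lemma isState_inv_trace_smul {P : Matrix (Fin n) (Fin n) ℂ} (hP : P.PosSemidef)
    (h : P.trace ≠ 0) : IsState (P.trace⁻¹ • P) :=
  ⟨hP.smul (inv_nonneg.mpr hP.trace_nonneg), by
    rw [Matrix.trace_smul, smul_eq_mul, inv_mul_cancel₀ h]⟩

lemma IsState.inv_two_smul_add {ρ σ : Matrix (Fin n) (Fin n) ℂ} (hρ : IsState ρ)
    (hσ : IsState σ) : IsState ((2⁻¹ : ℂ) • (ρ + σ)) := by
  refine ⟨(hρ.1.add hσ.1).smul (inv_pos.mpr two_pos).le, ?_⟩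
  rw [Matrix.trace_smul, Matrix.trace_add, hρ.2, hσ.2]
  norm_num

lemma eq_of_forall_isState_trace_mul_eq {X Y : Matrix (Fin n) (Fin n) ℂ}
    (h : ∀ ρ, IsState ρ → (ρ * X).trace = (ρ * Y).trace) : X = Y := by
  refine Matrix.eq_of_forall_posSemidef_trace_mul_eq fun P hP => ?_
  by_cases hP0 : P.trace = 0
  · simp [hP.trace_eq_zero_iff.mp hP0]
  · simpa [Matrix.smul_mul, inv_ne_zero hP0] using h _ (isState_inv_trace_smul hP hP0)

lemma exists_isState_trace_mul_pos {a b : Matrix (Fin n) (Fin n) ℂ} (ha : a.PosSemidef)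
    (hb : b.PosSemidef) (ha0 : a ≠ 0) (hb0 : b ≠ 0) :
    ∃ ρ, IsState ρ ∧ 0 < (ρ * a).trace ∧ 0 < (ρ * b).trace := by
  have hn : n ≠ 0 := by
    rintro rfl
    exact ha0 (Subsingleton.elim _ _)
  have htrace_one : (1 : Matrix (Fin n) (Fin n) ℂ).trace = n := by simp
  have trace_pos {c : Matrix (Fin n) (Fin n) ℂ} (hc : c.PosSemidef) (hc0 : c ≠ 0) :
      0 < (((1 : Matrix (Fin n) (Fin n) ℂ).trace)⁻¹ • 1 * c).trace := by
    rw [Matrix.smul_mul, Matrix.one_mul, Matrix.trace_smul, smul_eq_mul, htrace_one]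
    exact mul_pos (inv_pos.mpr (Nat.cast_pos.mpr (Nat.pos_of_ne_zero hn)))
      (hc.trace_nonneg.lt_of_ne (Ne.symm (mt hc.trace_eq_zero_iff.mp hc0)))
  exact ⟨_, isState_inv_trace_smul .one (htrace_one ▸ Nat.cast_ne_zero.mpr hn),
    trace_pos ha ha0, trace_pos hb hb0⟩

lemma forall_isState_trace_mul_eq_of_trace_ne_zero {a b X Y : Matrix (Fin n) (Fin n) ℂ}
    (ha : a.PosSemidef) (hb : b.PosSemidef) {ρ₀ : Matrix (Fin n) (Fin n) ℂ} (hρ₀ : IsState ρ₀)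
    (ha₀ : 0 < (ρ₀ * a).trace) (hb₀ : 0 < (ρ₀ * b).trace)
    (h : ∀ ρ, IsState ρ → (ρ * a).trace ≠ 0 → (ρ * b).trace ≠ 0 →
      (ρ * X).trace = (ρ * Y).trace)
    (ρ : Matrix (Fin n) (Fin n) ℂ) (hρ : IsState ρ) : (ρ * X).trace = (ρ * Y).trace := by
  have trace_midpoint (A : Matrix (Fin n) (Fin n) ℂ) :
      ((2⁻¹ : ℂ) • (ρ₀ + ρ) * A).trace = 2⁻¹ * ((ρ₀ * A).trace + (ρ * A).trace) := by
    rw [Matrix.smul_mul, Matrix.add_mul, Matrix.trace_smul, Matrix.trace_add, smul_eq_mul]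
  have midpoint_pos {c : Matrix (Fin n) (Fin n) ℂ} (hc : c.PosSemidef) (h₀ : 0 < (ρ₀ * c).trace) :
      ((2⁻¹ : ℂ) • (ρ₀ + ρ) * c).trace ≠ 0 := by
    rw [trace_midpoint]
    exact (mul_pos (inv_pos.mpr two_pos)
      (add_pos_of_pos_of_nonneg h₀ (hρ.1.trace_mul_nonneg hc))).ne'
  have hmid := h _ (hρ₀.inv_two_smul_add hρ) (midpoint_pos ha ha₀) (midpoint_pos hb hb₀)
  rw [trace_midpoint, trace_midpoint, h ρ₀ hρ₀ ha₀.ne' hb₀.ne'] at hmid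
  linear_combination 2 * hmid

end IsState

theorem bayes_second_rule_iff_general {n m k : ℕ}
    (K : Fin m → Matrix (Fin n) (Fin n) ℂ)
    (L : Fin k → Matrix (Fin n) (Fin n) ℂ)
    (a b : Matrix (Fin n) (Fin n) ℂ) (ha : IsEffect a) (hb : IsEffect b)
    (hmeasI : KrausDual K 1 = a) (hmeasJ : KrausDual L 1 = b) :
    (∀ ρ : Matrix (Fin n) (Fin n) ℂ, IsState ρ →
        (ρ * a).trace ≠ 0 → (ρ * b).trace ≠ 0 →
        (ρ * KrausDual K b).trace / (ρ * a).trace =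
          ((ρ * b).trace / (ρ * a).trace) *
            ((ρ * KrausDual L a).trace / (ρ * b).trace))
      ↔ KrausDual K b = KrausDual L a := by
  constructor
  · intro hbayes
    by_cases ha0 : a = 0
    · rw [krausDual_eq_zero_of_krausDual_one_eq_zero K (hmeasI.trans ha0) hb, ha0, krausDual_zero]
    by_cases hb0 : b = 0
    · rw [krausDual_eq_zero_of_krausDual_one_eq_zero L (hmeasJ.trans hb0) ha, hb0, krausDual_zero]
    obtain ⟨ρ₀, hρ₀, ha₀, hb₀⟩ := exists_isState_trace_mul_pos ha.1 hb.1 ha0 hb0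
    refine eq_of_forall_isState_trace_mul_eq <|
      forall_isState_trace_mul_eq_of_trace_ne_zero ha.1 hb.1 hρ₀ ha₀ hb₀ fun ρ hρ hρa hρb => ?_
    have h := hbayes ρ hρ hρa hρb
    rwa [mul_comm, div_mul_div_cancel₀ hρb, div_left_inj' hρa] at h
  · rintro heq ρ - hρa hρb
    rw [heq, mul_comm, div_mul_div_cancel₀ hρb]

/-- if the operation with Kraus operators `K` measures `a` and the one
with Kraus operators `L` measures `b`, then Bayes' quantum second rule
`P_ρ(b|a) = (P_ρ(b)/P_ρ(a))·P_ρ(a|b)` holds for every state `ρ` with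
`tr(ρa) ≠ 0` and `tr(ρb) ≠ 0` if and only if `𝓘*(b) = 𝓙*(a)`. -/
theorem bayes_second_rule_iff {n m k : ℕ}
    (K : Fin m → Matrix (Fin n) (Fin n) ℂ)
    (L : Fin k → Matrix (Fin n) (Fin n) ℂ)
    (hK : (1 - ∑ i, (K i)ᴴ * K i).PosSemidef)
    (hL : (1 - ∑ i, (L i)ᴴ * L i).PosSemidef)
    (a b : Matrix (Fin n) (Fin n) ℂ) (ha : IsEffect a) (hb : IsEffect b)
    (hmeasI : KrausDual K 1 = a) (hmeasJ : KrausDual L 1 = b) :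
    (∀ ρ : Matrix (Fin n) (Fin n) ℂ, IsState ρ →
        (ρ * a).trace ≠ 0 → (ρ * b).trace ≠ 0 →
        (ρ * KrausDual K b).trace / (ρ * a).trace =
          ((ρ * b).trace / (ρ * a).trace) *
            ((ρ * KrausDual L a).trace / (ρ * b).trace))
      ↔ KrausDual K b = KrausDual L a :=
  bayes_second_rule_iff_general K L a b ha hb hmeasI hmeasJ
end

section
/- An observable B is commuting (B_yB_{y'} = B_{y'}B_y for all y, y') if and only if there exists an atomic observable A and an instrument measuring A such that B = (B|A). -/
open scoped ComplexOrder

open Matrix BigOperators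

/-- An atomic effect: a rank-one (orthogonal) projection. -/
def IsAtomicEffect {n : ℕ} (a : Matrix (Fin n) (Fin n) ℂ) : Prop :=
  a.IsHermitian ∧ a * a = a ∧ a.rank = 1

/-!
Commuting Hermitian matrices `B_y` have a common orthonormal eigenbasis `v_x`. The rank-one
projections `A_x = v_x v_xᴴ` form an atomic observable with `B_y A_x = μ_{xy} A_x`, so the Lüders
instrument gives `Σ_x A_x B_y A_x = Σ_x B_y A_x = B_y`.

Conversely, positivity of `D_x` gives `0 ≤ D_x(B_y) ≤ D_x(I) = A_x`, and a positive matrix below a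
rank-one projection is a multiple of it. Hence every `B_y` is a linear combination of the `A_x`,
and these commute: projections summing to `I` are mutually orthogonal.
-/

open Module (finrank)

section JointEigenbasis

variable {𝕜 E ι : Type*} [RCLike 𝕜] [NormedAddCommGroup E] [InnerProductSpace 𝕜 E]
  [FiniteDimensional 𝕜 E]

theorem DirectSum.IsInternal.exists_orthonormalBasis_subordinate [DecidableEq ι]
    {V : ι → Submodule 𝕜 E} (hV : IsInternal V)
    (hV' : OrthogonalFamily 𝕜 (fun i => V i) fun i => (V i).subtypeₗᵢ) :
    ∃ (b : OrthonormalBasis (Fin (finrank 𝕜 E)) 𝕜 E) (f : Fin (finrank 𝕜 E) → ι),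
      ∀ k, b k ∈ V (f k) := by
  let _ : Fintype {i // V i ≠ ⊥} := hV.submodule_iSupIndep.fintypeNeBotOfFiniteDimensional
  have hW : IsInternal fun i : {i // V i ≠ ⊥} => V i := isInternal_ne_bot_iff.mpr hV
  have hW' := hV'.comp (Subtype.val_injective (p := fun i => V i ≠ ⊥))
  exact ⟨hW.subordinateOrthonormalBasis rfl hW',
    fun k => (hW.subordinateOrthonormalBasisIndex rfl k hW').val,
    fun k => hW.subordinateOrthonormalBasis_subordinate rfl k hW'⟩

open Function in
theorem LinearMap.IsSymmetric.exists_orthonormalBasis_apply_eq_smul_of_commute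
    {T : ι → Module.End 𝕜 E} (hT : ∀ i, (T i).IsSymmetric) (hC : Pairwise (Commute on T)) :
    ∃ (b : OrthonormalBasis (Fin (finrank 𝕜 E)) 𝕜 E) (μ : Fin (finrank 𝕜 E) → ι → 𝕜),
      ∀ k i, T i (b k) = μ k i • b k := by
  classical
  obtain ⟨b, μ, hb⟩ := DirectSum.IsInternal.exists_orthonormalBasis_subordinate
    (directSum_isInternal_of_pairwise_commute hT hC) (orthogonalFamily_iInf_eigenspaces hT)
  exact ⟨b, μ, fun k i => Module.End.mem_eigenspace_iff.mp (Submodule.mem_iInf _ |>.mp (hb k) i)⟩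

end JointEigenbasis

section EuclideanSpace

variable {𝕜 m ι : Type*} [RCLike 𝕜] [Fintype m]

theorem Matrix.exists_orthonormalBasis_mulVec_eq_smul_of_commute [DecidableEq m]
    {B : ι → Matrix m m 𝕜} (hB : ∀ i, (B i).IsHermitian) (hC : ∀ i j, Commute (B i) (B j)) :
    ∃ (b : OrthonormalBasis m 𝕜 (EuclideanSpace 𝕜 m)) (μ : m → ι → 𝕜),
      ∀ k i, B i *ᵥ b k = μ k i • ⇑(b k) := by
  have hT : ∀ i, (toEuclideanLin (B i)).IsSymmetric :=
    fun i => isSymmetric_toEuclideanLin_iff.mpr (hB i)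
  have hTC : Pairwise fun i j => Commute (toEuclideanLin (B i)) (toEuclideanLin (B j)) := by
    intro i j _
    ext w : 1
    simp only [Module.End.mul_apply, toLpLin_apply, mulVec_mulVec, (hC i j).eq]
  obtain ⟨b, μ, hb⟩ := LinearMap.IsSymmetric.exists_orthonormalBasis_apply_eq_smul_of_commute hT hTC
  let e : Fin (finrank 𝕜 (EuclideanSpace 𝕜 m)) ≃ m :=
    (finCongr finrank_euclideanSpace).trans (Fintype.equivFin m).symm
  refine ⟨b.reindex e, fun k => μ (e.symm k), fun k i => ?_⟩
  simpa using congrArg WithLp.ofLp (hb (e.symm k) i)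

variable [Fintype ι] (b : OrthonormalBasis ι 𝕜 (EuclideanSpace 𝕜 m))

theorem OrthonormalBasis.sum_vecMulVec_star_eq_one [DecidableEq m] :
    ∑ k, vecMulVec ⇑(b k) (star ⇑(b k)) = 1 := by
  have := congrArg (fun T : EuclideanSpace 𝕜 m →L[𝕜] EuclideanSpace 𝕜 m =>
    toEuclideanLin.symm (T : EuclideanSpace 𝕜 m →ₗ[𝕜] EuclideanSpace 𝕜 m)) b.sum_rankOne_eq_id
  simpa [InnerProductSpace.symm_toEuclideanLin_rankOne] using this

theorem OrthonormalBasis.star_dotProduct_self (k : ι) : star ⇑(b k) ⬝ᵥ ⇑(b k) = 1 := by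
  rw [dotProduct_comm, ← EuclideanSpace.inner_eq_star_dotProduct, b.inner_eq_one]

end EuclideanSpace

section Projections

variable {𝕜 m ι : Type*} [RCLike 𝕜] [Fintype m] [DecidableEq m] [Fintype ι]

open scoped MatrixOrder in
theorem Matrix.mul_eq_zero_of_sum_eq_one {P : ι → Matrix m m 𝕜} (hP : ∀ i, (P i).IsHermitian)
    (hPP : ∀ i, P i * P i = P i) (hsum : ∑ i, P i = 1) {i j : ι} (hij : i ≠ j) :
    P i * P j = 0 := by
  classical
  -- `P j = Σ_z P j * P z * P j`, a sum of positive terms one of which is already `P j`.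
  have hsq : ∀ z, P j * P z * P j = (P z * P j)ᴴ * (P z * P j) := fun z => by
    rw [conjTranspose_mul, (hP j).eq, (hP z).eq, Matrix.mul_assoc, Matrix.mul_assoc,
      ← Matrix.mul_assoc (P z), hPP]
  have hrest : ∑ z ∈ Finset.univ.erase j, P j * P z * P j = 0 := by
    have h := congrArg (fun M => P j * M * P j) hsum
    simp only [Finset.mul_sum, Finset.sum_mul, mul_one, hPP] at h
    rwa [← Finset.add_sum_erase _ _ (Finset.mem_univ j), hPP, hPP, add_eq_left] at h
  have hzero := (Finset.sum_eq_zero_iff_of_nonneg fun z _ => hsq z ▸ star_mul_self_nonneg _).mp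
    hrest i (Finset.mem_erase.mpr ⟨hij, Finset.mem_univ i⟩)
  rwa [hsq, conjTranspose_mul_self_eq_zero] at hzero

theorem Matrix.commute_of_sum_eq_one {P : ι → Matrix m m 𝕜} (hP : ∀ i, (P i).IsHermitian)
    (hPP : ∀ i, P i * P i = P i) (hsum : ∑ i, P i = 1) (i j : ι) : Commute (P i) (P j) := by
  rcases eq_or_ne i j with rfl | hij
  · exact Commute.refl _
  · exact (mul_eq_zero_of_sum_eq_one hP hPP hsum hij).trans
      (mul_eq_zero_of_sum_eq_one hP hPP hsum hij.symm).symm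

theorem Matrix.PosSemidef.mul_eq_self_of_sub_posSemidef {M P : Matrix m m 𝕜}
    (hM : M.PosSemidef) (hPM : (P - M).PosSemidef) (hP : P * P = P) : M * P = M := by
  suffices h : M * (1 - P) = 0 by rwa [Matrix.mul_sub, mul_one, sub_eq_zero, eq_comm] at h
  refine ext_iff_mulVec.mpr fun x => ?_
  -- On the kernel of `P` the form of `M` lies between `0` and that of `P`, which vanishes there.
  set u := (1 - P) *ᵥ x
  have hPu : P *ᵥ u = 0 := by
    rw [mulVec_mulVec, Matrix.mul_sub, mul_one, hP, sub_self, zero_mulVec]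
  have hle : 0 ≤ -(star u ⬝ᵥ M *ᵥ u) := by
    simpa [sub_mulVec, hPu] using hPM.dotProduct_mulVec_nonneg u
  have hMu : M *ᵥ u = 0 := (hM.dotProduct_mulVec_zero_iff u).mp
    (le_antisymm (neg_nonneg.mp hle) (hM.dotProduct_mulVec_nonneg u))
  rw [← mulVec_mulVec, hMu, zero_mulVec]

end Projections

section RankOne

variable {K m n : Type*} [Field K] [Fintype n]

theorem Matrix.exists_eq_vecMulVec_of_rank_le_one [Finite m] {A : Matrix m n K}
    (hA : A.rank ≤ 1) : ∃ u w, A = vecMulVec u w := by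
  rw [rank_eq_finrank_span_cols, finrank_le_one_iff] at hA
  obtain ⟨u, hu⟩ := hA
  choose w hw using fun j => hu ⟨A.col j, Submodule.subset_span ⟨j, rfl⟩⟩
  refine ⟨u, w, Matrix.ext fun i j => ?_⟩
  have := congrArg (fun v : Submodule.span K (Set.range A.col) => (v : m → K) i) (hw j)
  simpa [vecMulVec_apply, mul_comm] using this.symm

theorem Matrix.exists_mul_mul_eq_smul_of_rank_le_one {P : Matrix n n K} (hP : P.rank ≤ 1)
    (M : Matrix n n K) : ∃ c : K, P * M * P = c • P := by
  obtain ⟨u, w, rfl⟩ := exists_eq_vecMulVec_of_rank_le_one hP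
  exact ⟨(w ᵥ* M) ⬝ᵥ u, by rw [vecMulVec_mul, vecMulVec_mul_vecMulVec, vecMulVec_smul]⟩

end RankOne

section Luders

variable {R m : Type*} [CommSemiring R] [Fintype m]

/-- Self-dual for Hermitian `P`, so it is both the Lüders instrument of `P` and its dual map. -/
def Matrix.luders (P : Matrix m m R) : Matrix m m R →ₗ[R] Matrix m m R :=
  LinearMap.mulLeft R P ∘ₗ LinearMap.mulRight R P

theorem Matrix.luders_apply (P M : Matrix m m R) : luders P M = P * M * P := by
  simp [luders, Matrix.mul_assoc]

theorem Matrix.sum_mul_mul_eq_of_mul_eq_smul [DecidableEq m] {ι : Type*} [Fintype ι]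
    {P : ι → Matrix m m R} (hPP : ∀ i, P i * P i = P i) (hsum : ∑ i, P i = 1)
    {B : Matrix m m R} {μ : ι → R} (hB : ∀ i, B * P i = μ i • P i) :
    ∑ i, P i * B * P i = B := by
  have hsandwich : ∀ i, P i * B * P i = B * P i := fun i => by
    rw [Matrix.mul_assoc, hB, mul_smul_comm, hPP]
  simp only [hsandwich, ← Finset.mul_sum, hsum, mul_one]

end Luders

namespace IsAtomicEffect

variable {n : ℕ} {A : Matrix (Fin n) (Fin n) ℂ}

theorem exists_eq_smul_of_le {M : Matrix (Fin n) (Fin n) ℂ} (hA : IsAtomicEffect A)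
    (hM : M.PosSemidef) (hAM : (A - M).PosSemidef) : ∃ c : ℂ, M = c • A := by
  have hMA : M * A = M := hM.mul_eq_self_of_sub_posSemidef hAM hA.2.1
  have hAM' : A * M = M := by
    simpa [hA.1.eq, hM.1.eq] using congrArg conjTranspose hMA
  obtain ⟨c, hc⟩ := exists_mul_mul_eq_smul_of_rank_le_one hA.2.2.le M
  exact ⟨c, by rw [← hc, hAM', hMA]⟩

end IsAtomicEffect

theorem isAtomicEffect_vecMulVec_star {n : ℕ} {v : Fin n → ℂ} (hv : star v ⬝ᵥ v = 1) :
    IsAtomicEffect (vecMulVec v (star v)) := by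
  have hPv : vecMulVec v (star v) *ᵥ v = v := by
    rw [vecMulVec_mulVec, hv, MulOpposite.op_one, one_smul]
  refine ⟨by simp [IsHermitian, conjTranspose_vecMulVec], by
    rw [vecMulVec_mul_vecMulVec, hv, one_smul], le_antisymm (rank_vecMulVec_le _ _) ?_⟩
  have hv0 : v ≠ 0 := by rintro rfl; simp at hv
  rw [Nat.one_le_iff_ne_zero, rank, Ne, Submodule.finrank_eq_zero]
  intro hrange
  have hvmem : v ∈ LinearMap.range (vecMulVec v (star v)).mulVecLin := ⟨v, hPv⟩
  exact hv0 (by rwa [hrange, Submodule.mem_bot] at hvmem)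

theorem commuting_iff_conditioned_by_atomic_general {n : ℕ} {Y : Type*}
    (B : Y → Matrix (Fin n) (Fin n) ℂ)
    (hB : ∀ y, IsEffect (B y)) :
    (∀ y y', B y * B y' = B y' * B y) ↔
    ∃ (A : Fin n → Matrix (Fin n) (Fin n) ℂ)
      (D : Fin n → (Matrix (Fin n) (Fin n) ℂ →ₗ[ℂ] Matrix (Fin n) (Fin n) ℂ)),
      (∀ x, IsAtomicEffect (A x)) ∧ (∑ x, A x = 1) ∧
      (∀ x, ∀ M : Matrix (Fin n) (Fin n) ℂ, M.PosSemidef → (D x M).PosSemidef) ∧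
      (∀ x, D x 1 = A x) ∧
      (∀ y, B y = ∑ x, D x (B y)) := by
  constructor
  · intro hcomm
    obtain ⟨b, μ, hb⟩ :=
      exists_orthonormalBasis_mulVec_eq_smul_of_commute (fun y => (hB y).1.1) hcomm
    set A := fun x => vecMulVec ⇑(b x) (star ⇑(b x))
    have hA : ∀ x, IsAtomicEffect (A x) :=
      fun x => isAtomicEffect_vecMulVec_star (b.star_dotProduct_self x)
    refine ⟨A, fun x => luders (A x), hA, b.sum_vecMulVec_star_eq_one, fun x M hM => ?_,
      fun x => by rw [luders_apply, mul_one, (hA x).2.1], fun y => ?_⟩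
    · simpa [luders_apply, (hA x).1.eq] using hM.mul_mul_conjTranspose_same (A x)
    · simp only [luders_apply]
      exact (sum_mul_mul_eq_of_mul_eq_smul (fun x => (hA x).2.1) b.sum_vecMulVec_star_eq_one
        fun x => by rw [mul_vecMulVec, hb, smul_vecMulVec]).symm
  · rintro ⟨A, D, hA, hAsum, hDpos, hD1, hBD⟩
    have hAcomm := commute_of_sum_eq_one (fun x => (hA x).1) (fun x => (hA x).2.1) hAsum
    choose c hc using fun x y => (hA x).exists_eq_smul_of_le (hDpos x _ (hB y).1)
      (by simpa [hD1] using hDpos x _ (hB y).2)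
    intro y y'
    rw [hBD y, hBD y']
    simp only [hc]
    exact Commute.sum_left _ _ _ fun x _ => Commute.sum_right _ _ _ fun x' _ =>
      ((hAcomm x x').smul_left _).smul_right _

/-- an observable `B = {B_y}` is commuting iff there exist an atomic
observable `A = {A_x}` and an instrument measuring `A` (represented by its dual maps
`D_x`, which are positive and satisfy `D_x(I) = A_x`) such that `B = (B|A)`, i.e.
`B_y = Σ_x D_x(B_y)` for all `y`. -/
theorem commuting_iff_conditioned_by_atomic {n : ℕ} {Y : Type*} [Fintype Y]
    (B : Y → Matrix (Fin n) (Fin n) ℂ)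
    (hB : ∀ y, IsEffect (B y)) (hBsum : ∑ y, B y = 1) :
    (∀ y y', B y * B y' = B y' * B y) ↔
    ∃ (A : Fin n → Matrix (Fin n) (Fin n) ℂ)
      (D : Fin n → (Matrix (Fin n) (Fin n) ℂ →ₗ[ℂ] Matrix (Fin n) (Fin n) ℂ)),
      (∀ x, IsAtomicEffect (A x)) ∧ (∑ x, A x = 1) ∧
      (∀ x, ∀ M : Matrix (Fin n) (Fin n) ℂ, M.PosSemidef → (D x M).PosSemidef) ∧
      (∀ x, D x 1 = A x) ∧
      (∀ y, B y = ∑ x, D x (B y)) :=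
  commuting_iff_conditioned_by_atomic_general B hB
end
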